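/- arXiv:2006.00588 — 2 statements merged into one kernel-verified Lean document; each statement's English description precedes it below -/
import Mathlib

section
/- Let H be the join of L ≅ K_{1,3} and R ≅ K_{1,4} (vertex-disjoint, with all edges between them added). Then every proper edge-colouring of H contains a rainbow copy of K_4. -/
open SimpleGraph

/-- The join of two vertex-disjoint graphs: both graphs together with all edges
between them. -/
def graphJoin {α β : Type*} (L : SimpleGraph α) (R : SimpleGraph β) :
    SimpleGraph (α ⊕ β) :=
  (L ⊕g R) ⊔ SimpleGraph.fromRel (fun x y => x.isLeft ∧ y.isRight)

/-- The star `K_{1,m}`: `Fin (m+1)` with centre `0` joined to all other vertices. -/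
def starGraph (m : ℕ) : SimpleGraph (Fin (m + 1)) :=
  SimpleGraph.fromRel (fun a _ => a = 0)

/-- An edge-colouring is proper if any two distinct edges sharing a vertex get
distinct colours. -/
def IsProperEdgeColouring {V : Type*} (G : SimpleGraph V) (ψ : Sym2 V → ℕ) : Prop :=
  ∀ e₁ ∈ G.edgeSet, ∀ e₂ ∈ G.edgeSet, e₁ ≠ e₂ → (∃ v, v ∈ e₁ ∧ v ∈ e₂) → ψ e₁ ≠ ψ e₂

/-- A set of vertices spans a rainbow clique: it is a clique and the colouring is
injective on the edges spanned by it. -/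
def IsRainbowClique {V : Type*} (G : SimpleGraph V) (ψ : Sym2 V → ℕ) (s : Finset V) :
    Prop :=
  G.IsClique s ∧
    ∀ a ∈ s, ∀ b ∈ s, ∀ c ∈ s, ∀ d ∈ s, a ≠ b → c ≠ d →
      ψ s(a, b) = ψ s(c, d) → s(a, b) = s(c, d)

/-
In a proper edge-colouring a `K₄` is rainbow as soon as none of its three perfect matchings
is monochromatic. Let `abc` be a triangle with four common neighbours `d`, e.g. the two
centres and a leaf of `K_{1,3}` with the leaves of `K_{1,4}`. If no `{a, b, c, d}` is rainbow,
then for each `d` one of `cd`, `bd`, `ad` has the colour of the opposite triangle edge; as a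
vertex has at most one edge of each colour, each of these three cases holds for at most one
`d`, which is impossible for four of them.
-/

open Finset

section Join

variable {α β : Type*} {L : SimpleGraph α} {R : SimpleGraph β}

@[simp]
theorem graphJoin_adj_inl_inl {a a' : α} :
    (graphJoin L R).Adj (.inl a) (.inl a') ↔ L.Adj a a' := by
  simp [graphJoin]

@[simp]
theorem graphJoin_adj_inr_inr {b b' : β} :
    (graphJoin L R).Adj (.inr b) (.inr b') ↔ R.Adj b b' := by
  simp [graphJoin]

@[simp]
theorem graphJoin_adj_inl_inr (a : α) (b : β) : (graphJoin L R).Adj (.inl a) (.inr b) := by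
  simp [graphJoin]

end Join

@[simp]
theorem starGraph_zero_adj {m : ℕ} {i : Fin (m + 1)} :
    (_root_.starGraph m).Adj 0 i ↔ i ≠ 0 := by
  simp [_root_.starGraph, eq_comm]

namespace IsProperEdgeColouring

variable {V : Type*} {G : SimpleGraph V} {ψ : Sym2 V → ℕ}

theorem eq_of_apply_eq (hψ : IsProperEdgeColouring G ψ) {x y z : V} (hxy : G.Adj x y)
    (hxz : G.Adj x z) (h : ψ s(x, y) = ψ s(x, z)) : y = z := by
  by_contra hyz
  exact hψ _ hxy _ hxz (by simp [hyz, hxz.ne]) ⟨x, by simp, by simp⟩ h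

theorem card_filter_apply_eq_le_one (hψ : IsProperEdgeColouring G ψ) {x : V}
    {D : Finset V} (hD : ∀ d ∈ D, G.Adj x d) (k : ℕ) :
    #{d ∈ D | ψ s(x, d) = k} ≤ 1 := by
  refine card_le_one.2 fun y hy z hz => ?_
  rw [mem_filter] at hy hz
  exact hψ.eq_of_apply_eq (hD y hy.1) (hD z hz.1) (hy.2.trans hz.2.symm)

theorem isRainbowClique (hψ : IsProperEdgeColouring G ψ) {s : Finset V} (hs : G.IsClique s)
    (h : ∀ a ∈ s, ∀ b ∈ s, ∀ c ∈ s, ∀ d ∈ s,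
      a ≠ b → a ≠ c → a ≠ d → b ≠ c → b ≠ d → c ≠ d → ψ s(a, b) ≠ ψ s(c, d)) :
    IsRainbowClique G ψ s := by
  have common {x y z : V} (hx : x ∈ s) (hy : y ∈ s) (hz : z ∈ s) (hxy : x ≠ y) (hxz : x ≠ z)
      (he : ψ s(x, y) = ψ s(x, z)) : s(x, y) = s(x, z) := by
    rw [hψ.eq_of_apply_eq (hs hx hy hxy) (hs hx hz hxz) he]
  refine ⟨hs, fun a ha b hb c hc d hd hab hcd he => ?_⟩
  by_cases hac : a = c
  · subst hac
    exact common ha hb hd hab hcd he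
  by_cases had : a = d
  · subst had
    rw [Sym2.eq_swap (a := c)] at he ⊢
    exact common ha hb hc hab hcd.symm he
  by_cases hbc : b = c
  · subst hbc
    rw [Sym2.eq_swap (a := a)] at he ⊢
    exact common hb ha hd hab.symm hcd he
  by_cases hbd : b = d
  · subst hbd
    rw [Sym2.eq_swap (a := a), Sym2.eq_swap (a := c)] at he ⊢
    exact common hb ha hc hab.symm hcd.symm he
  exact absurd he (h a ha b hb c hc d hd hab hac had hbc hbd hcd)

variable [DecidableEq V]

theorem isRainbowClique_of_matchings (hψ : IsProperEdgeColouring G ψ) {a b c d : V}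
    (hab : G.Adj a b) (hac : G.Adj a c) (had : G.Adj a d) (hbc : G.Adj b c) (hbd : G.Adj b d)
    (hcd : G.Adj c d) (h₁ : ψ s(a, b) ≠ ψ s(c, d)) (h₂ : ψ s(a, c) ≠ ψ s(b, d))
    (h₃ : ψ s(a, d) ≠ ψ s(b, c)) :
    IsRainbowClique G ψ {a, b, c, d} := by
  refine hψ.isRainbowClique ?_ ?_
  · simp [isClique_insert, hab, hac, had, hbc, hbd, hcd, hab.ne, hac.ne, had.ne, hbc.ne,
      hbd.ne, hcd.ne]
  · simp only [mem_insert, mem_singleton]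
    rintro w (rfl | rfl | rfl | rfl) x (rfl | rfl | rfl | rfl) y (rfl | rfl | rfl | rfl)
      z (rfl | rfl | rfl | rfl) <;> intros <;> first
      | contradiction
      -- `{w, x}, {y, z}` is one of the three perfect matchings, up to order
      | (try simp only [Sym2.eq_swap] at h₁ h₂ h₃ ⊢);
        first | exact h₁ | exact h₁.symm | exact h₂ | exact h₂.symm | exact h₃ | exact h₃.symm

theorem exists_isRainbowClique_of_triangle (hψ : IsProperEdgeColouring G ψ) {a b c : V}
    (hab : G.Adj a b) (hac : G.Adj a c) (hbc : G.Adj b c) {D : Finset V} (hD : 3 < #D)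
    (hDa : ∀ d ∈ D, G.Adj a d) (hDb : ∀ d ∈ D, G.Adj b d) (hDc : ∀ d ∈ D, G.Adj c d) :
    ∃ s : Finset V, #s = 4 ∧ IsRainbowClique G ψ s := by
  by_contra! hnone
  have hmono (d : V) (hd : d ∈ D) :
      ψ s(c, d) = ψ s(a, b) ∨ ψ s(b, d) = ψ s(a, c) ∨ ψ s(a, d) = ψ s(b, c) := by
    by_contra! h
    have had := hDa d hd
    have hbd := hDb d hd
    have hcd := hDc d hd
    exact hnone _
      (card_eq_four.2 ⟨a, b, c, d, hab.ne, hac.ne, had.ne, hbc.ne, hbd.ne, hcd.ne, rfl⟩)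
      (hψ.isRainbowClique_of_matchings hab hac had hbc hbd hcd h.1.symm h.2.1.symm h.2.2)
  have hcover : D ⊆ {d ∈ D | ψ s(c, d) = ψ s(a, b)} ∪ {d ∈ D | ψ s(b, d) = ψ s(a, c)} ∪
      {d ∈ D | ψ s(a, d) = ψ s(b, c)} := by
    intro d hd
    simpa [hd, or_assoc] using hmono d hd
  have hcard := (card_le_card hcover).trans ((card_union_le _ _).trans
    (Nat.add_le_add_right (card_union_le _ _) _))
  have h₁ := hψ.card_filter_apply_eq_le_one hDc (ψ s(a, b))
  have h₂ := hψ.card_filter_apply_eq_le_one hDb (ψ s(a, c))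
  have h₃ := hψ.card_filter_apply_eq_le_one hDa (ψ s(b, c))
  omega

end IsProperEdgeColouring

/-- every proper edge-colouring of the join of `K_{1,3}` and `K_{1,4}`
contains a rainbow copy of `K₄`. -/
theorem join_star_star_rainbow_K4
    (ψ : Sym2 (Fin 4 ⊕ Fin 5) → ℕ)
    (hproper : IsProperEdgeColouring (graphJoin (_root_.starGraph 3) (_root_.starGraph 4)) ψ) :
    ∃ s : Finset (Fin 4 ⊕ Fin 5), s.card = 4 ∧
      IsRainbowClique (graphJoin (_root_.starGraph 3) (_root_.starGraph 4)) ψ s := by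
  refine hproper.exists_isRainbowClique_of_triangle (a := .inl 0) (b := .inl 1) (c := .inr 0)
    (D := {.inr 1, .inr 2, .inr 3, .inr 4}) (by simp) (by simp) (by simp) (by decide) ?_ ?_ ?_ <;>
    simp only [mem_insert, mem_singleton] <;> rintro d (rfl | rfl | rfl | rfl) <;> simp
end

section
/- Let R_7 be the graph on vertices {u_1,u_2,u_3,w_1,w_2,w_3,w_4} with edges {u_1u_2, u_2u_3, u_1w_1, u_1w_2, u_2w_1, u_2w_2, u_2w_3, u_2w_4, u_3w_3, u_3w_4}, and let T_{10} be ten triangles glued at a single central vertex x (vertices x, v_1,...,v_20, edges xv_i for i ∈ [20] and v_{2i−1}v_{2i} for i ∈ [10]). For every proper edge-colouring ψ of the vertex-disjoint union of R_7 and T_{10}, there exist a triangle Q_1 ⊆ T_{10} and a triangle Q_2 ⊆ R_7 whose colour sets under ψ are disjoint. -/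
open SimpleGraph

/-- The graph `R₇` on vertices `u₁ u₂ u₃ w₁ w₂ w₃ w₄` (encoded as `0 1 2 3 4 5 6`),
obtained from a path `u₁u₂u₃` by attaching two triangles to each of its edges. -/
def R7 : SimpleGraph (Fin 7) :=
  SimpleGraph.fromRel (fun a b =>
    (a = 0 ∧ b = 1) ∨ (a = 1 ∧ b = 2) ∨ (a = 0 ∧ b = 3) ∨ (a = 0 ∧ b = 4) ∨
    (a = 1 ∧ b = 3) ∨ (a = 1 ∧ b = 4) ∨ (a = 1 ∧ b = 5) ∨ (a = 1 ∧ b = 6) ∨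
    (a = 2 ∧ b = 5) ∨ (a = 2 ∧ b = 6))

/-- The graph `T₁₀`: ten triangles glued along the central vertex `x = 0`;
the vertices `v₁, …, v₂₀` are `1, …, 20` and the triangles are `{0, 2i-1, 2i}`. -/
def T10 : SimpleGraph (Fin 21) :=
  SimpleGraph.fromRel (fun a b =>
    (a = 0 ∧ b ≠ 0) ∨ (a.val % 2 = 1 ∧ b.val = a.val + 1))

/-!
Suppose every triangle of `T₁₀` shares a colour with every triangle of `R₇`. Properness at
`u₁, u₂, u₃` leaves no colour on all four triangles of `R₇`, so every triangle of `T₁₀` has a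
spoke (an edge at `x`) coloured with one of the at most ten colours of `R₇`. The twenty spokes
have distinct colours, hence `R₇` is rainbow. In a rainbow `R₇` only the colours of `u₁u₂` and
`u₂u₃` lie on two triangles and none lies on three, so a triangle of `T₁₀` with just one spoke
coloured from `R₇` has that spoke coloured like `u₁u₂` or `u₂u₃`. Counting the spokes coloured
from `R₇`, those two colours twice, gives at least `20` and at most `10 + 2`.
-/

open Finset Function

namespace IsProperEdgeColouring

variable {V W : Type*} {G : SimpleGraph V} {H : SimpleGraph W} {ψ : Sym2 W → ℕ}

theorem comap (hψ : IsProperEdgeColouring H ψ) (f : G ↪g H) :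
    IsProperEdgeColouring G (ψ ∘ Sym2.map f) := by
  intro e₁ he₁ e₂ he₂ hne ⟨v, hv₁, hv₂⟩
  exact hψ _ (f.map_mem_edgeSet_iff.mpr he₁) _ (f.map_mem_edgeSet_iff.mpr he₂)
    ((Sym2.map.injective f.injective).ne hne)
    ⟨f v, Sym2.mem_map.mpr ⟨v, hv₁, rfl⟩, Sym2.mem_map.mpr ⟨v, hv₂, rfl⟩⟩

theorem injOn_incidenceSet (hψ : IsProperEdgeColouring H ψ) (v : W) :
    Set.InjOn ψ (H.incidenceSet v) := by
  intro e₁ he₁ e₂ he₂ h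
  by_contra hne
  exact hψ e₁ he₁.1 e₂ he₂.1 hne ⟨v, he₁.2, he₂.2⟩ h

theorem nodup_map (hψ : IsProperEdgeColouring H ψ) (v : W) {l : List (Sym2 W)} (hl : l.Nodup)
    (hv : ∀ e ∈ l, e ∈ H.incidenceSet v) : (l.map ψ).Nodup :=
  hl.map_on fun _ he₁ _ he₂ h => hψ.injOn_incidenceSet v (hv _ he₁) (hv _ he₂) h

end IsProperEdgeColouring

section Counting

variable {ι κ α : Type*} [Fintype ι]

theorem card_le_card_of_forall_exists_mem {f : ι × κ → α} (hf : Injective f) {X : Finset α}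
    (h : ∀ i, ∃ k, f (i, k) ∈ X) : Fintype.card ι ≤ #X := by
  choose k hk using h
  exact card_le_card_of_injOn (fun i => f (i, k i)) (fun i _ => hk i)
    fun i _ j _ hij => congrArg Prod.fst (hf hij)

variable [DecidableEq α]

theorem card_filter_mem_le [Fintype κ] {f : κ → α} (hf : Injective f) (X : Finset α) :
    #{j | f j ∈ X} ≤ #X :=
  card_le_card_of_injOn f (fun _ hj => (mem_filter.mp hj).2) hf.injOn

theorem two_mul_card_le_card_add_card {f : ι × Fin 2 → α} (hf : Injective f) {X Y : Finset α}
    (hYX : Y ⊆ X) (h : ∀ i, (f (i, 0) ∈ X ∧ f (i, 1) ∈ X) ∨ ∃ k, f (i, k) ∈ Y) :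
    2 * Fintype.card ι ≤ #X + #Y := by
  let weight : ι × Fin 2 → ℕ := fun j => (if f j ∈ X then 1 else 0) + if f j ∈ Y then 1 else 0
  have hweight : ∀ i, 2 ≤ ∑ k, weight (i, k) := by
    intro i
    rcases h i with ⟨h₀, h₁⟩ | ⟨k, hk⟩
    · simp only [weight, Fin.sum_univ_two, h₀, h₁, if_true]
      omega
    · calc 2 = weight (i, k) := by simp [weight, hk, hYX hk]
        _ ≤ ∑ k, weight (i, k) :=
          single_le_sum (f := fun k => weight (i, k)) (fun _ _ => Nat.zero_le _) (mem_univ k)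
  calc 2 * Fintype.card ι = ∑ _ : ι, 2 := by simp [mul_comm]
    _ ≤ ∑ i, ∑ k, weight (i, k) := sum_le_sum fun i _ => hweight i
    _ = #{j | f j ∈ X} + #{j | f j ∈ Y} := by
      rw [← Fintype.sum_prod_type', sum_add_distrib, card_filter, card_filter]
    _ ≤ #X + #Y := add_le_add (card_filter_mem_le hf X) (card_filter_mem_le hf Y)

end Counting

section R7Colours

/- `p, q` are the colours of `u₁u₂, u₂u₃`; `a, a'` and `b, b'` those of `u₁w₁, u₂w₁` and
`u₁w₂, u₂w₂`; `c, c'` and `d, d'` those of `u₂w₃, u₃w₃` and `u₂w₄, u₃w₄`. So `[p, a, b]`,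
`[p, q, a', b', c, d]` and `[q, c', d']` list the colours at `u₁, u₂, u₃`, and `{p, a', a}`,
`{p, b', b}`, `{q, c', c}`, `{q, d', d}` are the colour sets of the four triangles of `R₇`. -/
variable {p q a a' b b' c c' d d' s r t : ℕ}

theorem false_of_mem_four_triangles (h₀ : [p, a, b].Nodup) (h₁ : [p, q, a', b', c, d].Nodup)
    (h₂ : [q, c', d'].Nodup) {x : ℕ} (hA : x ∈ ({p, a', a} : Set ℕ))
    (hB : x ∈ ({p, b', b} : Set ℕ)) (hC : x ∈ ({q, c', c} : Set ℕ))
    (hD : x ∈ ({q, d', d} : Set ℕ)) : False := by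
  simp only [List.nodup_cons, List.mem_cons, List.not_mem_nil, not_or, Set.mem_insert_iff,
    Set.mem_singleton_iff] at *
  grind

theorem eq_or_eq_of_rainbow (h : [p, q, a, a', b, b', c, c', d, d'].Nodup) {x y : ℕ}
    (hA : x ∈ ({p, a', a} : Set ℕ) ∨ y ∈ ({p, a', a} : Set ℕ))
    (hB : x ∈ ({p, b', b} : Set ℕ) ∨ y ∈ ({p, b', b} : Set ℕ))
    (hC : x ∈ ({q, c', c} : Set ℕ) ∨ y ∈ ({q, c', c} : Set ℕ))
    (hD : x ∈ ({q, d', d} : Set ℕ) ∨ y ∈ ({q, d', d} : Set ℕ)) : x = p ∨ x = q := by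
  simp only [List.nodup_cons, List.mem_cons, List.not_mem_nil, not_or, Set.mem_insert_iff,
    Set.mem_singleton_iff] at *
  grind

theorem spoke_mem_palette (h₀ : [p, a, b].Nodup) (h₁ : [p, q, a', b', c, d].Nodup)
    (h₂ : [q, c', d'].Nodup) (hA : ¬Disjoint ({s, r, t} : Set ℕ) {p, a', a})
    (hB : ¬Disjoint ({s, r, t} : Set ℕ) {p, b', b})
    (hC : ¬Disjoint ({s, r, t} : Set ℕ) {q, c', c})
    (hD : ¬Disjoint ({s, r, t} : Set ℕ) {q, d', d}) :
    s ∈ [p, q, a, a', b, b', c, c', d, d'].toFinset ∨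
      t ∈ [p, q, a, a', b, b', c, c', d, d'].toFinset := by
  have hr := false_of_mem_four_triangles h₀ h₁ h₂ (x := r)
  simp only [Set.disjoint_insert_left, Set.disjoint_singleton_left, Set.mem_insert_iff,
    Set.mem_singleton_iff, List.mem_toFinset, List.mem_cons, List.not_mem_nil, not_or,
    not_and_or, not_not] at hA hB hC hD hr ⊢
  grind

theorem spoke_mem_pair_of_rainbow (h : [p, q, a, a', b, b', c, c', d, d'].Nodup)
    (hA : ¬Disjoint ({s, r, t} : Set ℕ) {p, a', a})
    (hB : ¬Disjoint ({s, r, t} : Set ℕ) {p, b', b})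
    (hC : ¬Disjoint ({s, r, t} : Set ℕ) {q, c', c})
    (hD : ¬Disjoint ({s, r, t} : Set ℕ) {q, d', d}) :
    (s ∈ [p, q, a, a', b, b', c, c', d, d'].toFinset ∧
        t ∈ [p, q, a, a', b, b', c, c', d, d'].toFinset) ∨
      s ∈ ({p, q} : Finset ℕ) ∨ t ∈ ({p, q} : Finset ℕ) := by
  have hs := eq_or_eq_of_rainbow h (x := s) (y := r)
  have ht := eq_or_eq_of_rainbow h (x := t) (y := r)
  simp only [Set.disjoint_insert_left, Set.disjoint_singleton_left, Set.mem_insert_iff,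
    Set.mem_singleton_iff, List.mem_toFinset, List.mem_cons, List.not_mem_nil, not_or,
    not_and_or, not_not, Finset.mem_insert, Finset.mem_singleton] at hA hB hC hD hs ht ⊢
  grind

theorem exists_fan_triangle_disjoint {ι : Type*} [Fintype ι] (hι : 10 ≤ Fintype.card ι)
    {spoke : ι × Fin 2 → ℕ} (hspoke : Injective spoke) (rim : ι → ℕ) (h₀ : [p, a, b].Nodup)
    (h₁ : [p, q, a', b', c, d].Nodup) (h₂ : [q, c', d'].Nodup) :
    ∃ i, Disjoint ({spoke (i, 0), rim i, spoke (i, 1)} : Set ℕ) {p, a', a} ∨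
      Disjoint ({spoke (i, 0), rim i, spoke (i, 1)} : Set ℕ) {p, b', b} ∨
      Disjoint ({spoke (i, 0), rim i, spoke (i, 1)} : Set ℕ) {q, c', c} ∨
      Disjoint ({spoke (i, 0), rim i, spoke (i, 1)} : Set ℕ) {q, d', d} := by
  by_contra! H
  have hpalette := card_le_card_of_forall_exists_mem hspoke fun i =>
    Fin.exists_fin_two.mpr (spoke_mem_palette h₀ h₁ h₂ (H i).1 (H i).2.1 (H i).2.2.1 (H i).2.2.2)
  have hcard : #([p, q, a, a', b, b', c, c', d, d'].toFinset) = 10 :=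
    le_antisymm (List.toFinset_card_le _) (hι.trans hpalette)
  have hrainbow : [p, q, a, a', b, b', c, c', d, d'].Nodup :=
    Multiset.toFinset_card_eq_card_iff_nodup.mp hcard
  have hcount := two_mul_card_le_card_add_card hspoke (Y := {p, q})
    (by simp [insert_subset_iff]) fun i => (spoke_mem_pair_of_rainbow hrainbow (H i).1 (H i).2.1
      (H i).2.2.1 (H i).2.2.2).imp_right Fin.exists_fin_two.mpr
  have hpq := card_le_two (a := p) (b := q)
  omega

end R7Colours

instance : DecidableRel R7.Adj := by unfold R7; infer_instance

instance : DecidableRel T10.Adj := by unfold T10; infer_instance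

/-- The `i`-th triangle of `T₁₀` is `{0, leaf (i, 0), leaf (i, 1)}`. -/
def T10.leaf (j : Fin 10 × Fin 2) : Fin 21 := ⟨2 * j.1 + j.2 + 1, by omega⟩

theorem T10.leaf_injective : Injective T10.leaf := by decide

theorem T10.adj_zero_leaf : ∀ j, T10.Adj 0 (T10.leaf j) := by decide

theorem T10.adj_leaf_leaf : ∀ i, T10.Adj (T10.leaf (i, 0)) (T10.leaf (i, 1)) := by decide

theorem exists_disjoint_triangles_of_proper {χ : Sym2 (Fin 7) → ℕ}
    (hχ : IsProperEdgeColouring R7 χ) {φ : Sym2 (Fin 21) → ℕ}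
    (hφ : IsProperEdgeColouring T10 φ) :
    ∃ a b c : Fin 21, ∃ d e f : Fin 7,
      T10.Adj a b ∧ T10.Adj b c ∧ T10.Adj a c ∧
      R7.Adj d e ∧ R7.Adj e f ∧ R7.Adj d f ∧
      Disjoint {n : ℕ | n = φ s(a, b) ∨ n = φ s(b, c) ∨ n = φ s(a, c)}
        {n : ℕ | n = χ s(d, e) ∨ n = χ s(e, f) ∨ n = χ s(d, f)} := by
  have hspoke : Injective fun j => φ s(0, T10.leaf j) := fun j j' h =>
    T10.leaf_injective <| Sym2.congr_right.mp <| hφ.injOn_incidenceSet 0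
      (T10.mk'_mem_incidenceSet_left_iff.mpr (T10.adj_zero_leaf j))
      (T10.mk'_mem_incidenceSet_left_iff.mpr (T10.adj_zero_leaf j')) h
  obtain ⟨i, hi⟩ := exists_fan_triangle_disjoint (by simp) hspoke
    (fun i => φ s(T10.leaf (i, 0), T10.leaf (i, 1)))
    (hχ.nodup_map 0 (l := [s(0, 1), s(0, 3), s(0, 4)]) (by decide) (by decide))
    (hχ.nodup_map 1 (l := [s(0, 1), s(1, 2), s(1, 3), s(1, 4), s(1, 5), s(1, 6)]) (by decide)
      (by decide))
    (hχ.nodup_map 2 (l := [s(1, 2), s(2, 5), s(2, 6)]) (by decide) (by decide))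
  have hab := T10.adj_zero_leaf (i, 0)
  have hbc := T10.adj_leaf_leaf i
  have hac := T10.adj_zero_leaf (i, 1)
  rcases hi with h | h | h | h
  · exact ⟨_, _, _, 0, 1, 3, hab, hbc, hac, by decide, by decide, by decide, h⟩
  · exact ⟨_, _, _, 0, 1, 4, hab, hbc, hac, by decide, by decide, by decide, h⟩
  · exact ⟨_, _, _, 1, 2, 5, hab, hbc, hac, by decide, by decide, by decide, h⟩
  · exact ⟨_, _, _, 1, 2, 6, hab, hbc, hac, by decide, by decide, by decide, h⟩

/-- for every proper edge-colouring `ψ` of the vertex-disjoint union of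
`R₇` and `T₁₀` there is a triangle `Q₁` of `T₁₀` and a triangle `Q₂` of `R₇` whose
colour sets under `ψ` are disjoint. -/
theorem disjointly_coloured_triangles
    (ψ : Sym2 (Fin 7 ⊕ Fin 21) → ℕ)
    (hproper : IsProperEdgeColouring (R7 ⊕g T10) ψ) :
    ∃ a b c : Fin 21, ∃ d e f : Fin 7,
      T10.Adj a b ∧ T10.Adj b c ∧ T10.Adj a c ∧
      R7.Adj d e ∧ R7.Adj e f ∧ R7.Adj d f ∧
      Disjoint
        {n : ℕ | n = ψ (Sym2.mk (Sum.inr a) (Sum.inr b)) ∨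
          n = ψ (Sym2.mk (Sum.inr b) (Sum.inr c)) ∨
          n = ψ (Sym2.mk (Sum.inr a) (Sum.inr c))}
        {n : ℕ | n = ψ (Sym2.mk (Sum.inl d) (Sum.inl e)) ∨
          n = ψ (Sym2.mk (Sum.inl e) (Sum.inl f)) ∨
          n = ψ (Sym2.mk (Sum.inl d) (Sum.inl f))} :=
  exists_disjoint_triangles_of_proper (hproper.comap Embedding.sumInl)
    (hproper.comap Embedding.sumInr)
end
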